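/- arXiv:math/0305421 — 5 statements merged into one kernel-verified Lean document; each statement's English description precedes it below -/
import Mathlib

section
/- For every integer b ≥ 2, the limit as j → ∞ of R_2(j·b; b, j·b) exists and equals √2·(b−1)·(4b+1)/(4b·√((b−1)(2b−1))). -/
/-- `S_2(a;b,c) = (1/a)·∑_{m=0}^{a−1} ⌊m·b/a⌋·⌊m·c/a⌋`. -/
noncomputable def S2 (a b c : ℕ) : ℝ :=
  (1 / (a : ℝ)) * ∑ m ∈ Finset.range a, ((m * b / a : ℕ) : ℝ) * ((m * c / a : ℕ) : ℝ)

/-- `M_2(a;b) = (1/a)·∑_{m=0}^{a−1} ⌊m·b/a⌋²`. -/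
noncomputable def M2 (a b : ℕ) : ℝ :=
  (1 / (a : ℝ)) * ∑ m ∈ Finset.range a, ((m * b / a : ℕ) : ℝ) ^ 2

/-- `R_2(a;b,c) = S_2(a;b,c)/√(M_2(a;b)·M_2(a;c))`. -/
noncomputable def R2 (a b c : ℕ) : ℝ := S2 a b c / Real.sqrt (M2 a b * M2 a c)

open Finset Filter

lemma sum_id_real (n : ℕ) : ∑ m ∈ range n, (m : ℝ) = n * ((n : ℝ) - 1) / 2 := by
  induction n with
  | zero => norm_num
  | succ n ih => rw [Finset.sum_range_succ, ih]; push_cast; ring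

lemma sum_sq_real (n : ℕ) :
    ∑ m ∈ range n, (m : ℝ) ^ 2 = n * ((n : ℝ) - 1) * (2 * (n : ℝ) - 1) / 6 := by
  induction n with
  | zero => norm_num
  | succ n ih => rw [Finset.sum_range_succ, ih]; push_cast; ring

lemma floor_block (j b i : ℕ) (hj : 0 < j) (hi : i < j) : (j * b + i) / j = b := by
  rw [Nat.mul_add_div hj, Nat.div_eq_of_lt hi, add_zero]

lemma sum_floor_sq (j : ℕ) (hj : 0 < j) (b : ℕ) :
    ∑ m ∈ range (j * b), ((m / j : ℕ) : ℝ) ^ 2 = j * ∑ q ∈ range b, (q : ℝ) ^ 2 := by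
  induction b with
  | zero => simp
  | succ b ih =>
    rw [Nat.mul_succ, Finset.sum_range_add, ih, Finset.sum_range_succ]
    have h : ∀ i ∈ range j, (((j * b + i) / j : ℕ) : ℝ) ^ 2 = (b : ℝ) ^ 2 := by
      intro i hi
      rw [floor_block j b i hj (Finset.mem_range.mp hi)]
    rw [Finset.sum_congr rfl h, Finset.sum_const, Finset.card_range]
    push_cast; ring

lemma sum_floor_mul (j : ℕ) (hj : 0 < j) (b : ℕ) :
    ∑ m ∈ range (j * b), ((m / j : ℕ) : ℝ) * (m : ℝ)
      = (j : ℝ) ^ 2 * ∑ q ∈ range b, (q : ℝ) ^ 2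
        + ((j : ℝ) * ((j : ℝ) - 1) / 2) * ∑ q ∈ range b, (q : ℝ) := by
  induction b with
  | zero => simp
  | succ b ih =>
    rw [Nat.mul_succ, Finset.sum_range_add, ih, Finset.sum_range_succ,
      Finset.sum_range_succ (fun q => (q : ℝ))]
    have h : ∀ i ∈ range j, (((j * b + i) / j : ℕ) : ℝ) * ((j * b + i : ℕ) : ℝ)
        = (b : ℝ) * ((j : ℝ) * (b : ℝ)) + (b : ℝ) * (i : ℝ) := by
      intro i hi
      rw [floor_block j b i hj (Finset.mem_range.mp hi)]
      push_cast; ring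
    rw [Finset.sum_congr rfl h, Finset.sum_add_distrib, Finset.sum_const, Finset.card_range,
      ← Finset.mul_sum, sum_id_real j]
    push_cast; ring

lemma M2_left_eq (j b : ℕ) (hj : 0 < j) (hb : 0 < b) :
    M2 (j * b) b = ((b : ℝ) - 1) * (2 * (b : ℝ) - 1) / 6 := by
  unfold M2
  have h : ∀ m ∈ range (j * b), ((m * b / (j * b) : ℕ) : ℝ) ^ 2 = ((m / j : ℕ) : ℝ) ^ 2 := by
    intro m _
    rw [Nat.mul_div_mul_right _ _ hb]
  rw [Finset.sum_congr rfl h, sum_floor_sq j hj b, sum_sq_real b]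
  push_cast
  have hj0 : (j : ℝ) ≠ 0 := Nat.cast_ne_zero.mpr hj.ne'
  have hb0 : (b : ℝ) ≠ 0 := Nat.cast_ne_zero.mpr hb.ne'
  field_simp

lemma M2_right_eq (a : ℕ) (ha : 0 < a) :
    M2 a a = ((a : ℝ) - 1) * (2 * (a : ℝ) - 1) / 6 := by
  unfold M2
  have h : ∀ m ∈ range a, ((m * a / a : ℕ) : ℝ) ^ 2 = (m : ℝ) ^ 2 := by
    intro m _
    rw [Nat.mul_div_cancel m ha]
  rw [Finset.sum_congr rfl h, sum_sq_real a]
  have ha0 : (a : ℝ) ≠ 0 := Nat.cast_ne_zero.mpr ha.ne'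
  field_simp

lemma S2_eq (j b : ℕ) (hj : 0 < j) (hb : 0 < b) :
    S2 (j * b) b (j * b)
      = (j : ℝ) * ((b : ℝ) - 1) * (2 * (b : ℝ) - 1) / 6 + ((j : ℝ) - 1) * ((b : ℝ) - 1) / 4 := by
  unfold S2
  have h : ∀ m ∈ range (j * b),
      ((m * b / (j * b) : ℕ) : ℝ) * ((m * (j * b) / (j * b) : ℕ) : ℝ)
        = ((m / j : ℕ) : ℝ) * (m : ℝ) := by
    intro m _
    rw [Nat.mul_div_mul_right _ _ hb, Nat.mul_div_cancel m (Nat.mul_pos hj hb)]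
  rw [Finset.sum_congr rfl h, sum_floor_mul j hj b, sum_sq_real b, sum_id_real b]
  have hj0 : (j : ℝ) ≠ 0 := Nat.cast_ne_zero.mpr hj.ne'
  have hb0 : (b : ℝ) ≠ 0 := Nat.cast_ne_zero.mpr hb.ne'
  push_cast
  field_simp
  ring

theorem R2_limit (b : ℕ) (hb : 2 ≤ b) :
    Filter.Tendsto (fun j : ℕ => R2 (j * b) b (j * b)) Filter.atTop
      (nhds (Real.sqrt 2 * ((b : ℝ) - 1) * (4 * (b : ℝ) + 1)
        / (4 * (b : ℝ) * Real.sqrt (((b : ℝ) - 1) * (2 * (b : ℝ) - 1))))) := by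
  have hb0 : 0 < b := by omega
  have hbR : (2 : ℝ) ≤ (b : ℝ) := by exact_mod_cast hb
  set X : ℝ := ((b : ℝ) - 1) * (2 * (b : ℝ) - 1) with hXdef
  have hX : 0 < X := by
    apply mul_pos <;> nlinarith
  set Num : ℕ → ℝ := fun j => X / 6 + (1 - (j : ℝ)⁻¹) * ((b : ℝ) - 1) / 4 with hNum
  set Den : ℕ → ℝ := fun j =>
    Real.sqrt (X / 6 * (((b : ℝ) - (j : ℝ)⁻¹) * (2 * (b : ℝ) - (j : ℝ)⁻¹) / 6)) with hDen
  -- eventual equality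
  have heq : (fun j : ℕ => Num j / Den j) =ᶠ[atTop] fun j : ℕ => R2 (j * b) b (j * b) := by
    filter_upwards [Filter.eventually_ge_atTop 1] with j hj
    have hj0 : 0 < j := hj
    have hjR : (0 : ℝ) < (j : ℝ) := by exact_mod_cast hj0
    have hjne : (j : ℝ) ≠ 0 := hjR.ne'
    have hbne : (b : ℝ) ≠ 0 := by positivity
    have hS : S2 (j * b) b (j * b) = (j : ℝ) * Num j := by
      rw [S2_eq j b hj0 hb0, hNum]
      field_simp
      ring
    have hM : M2 (j * b) b * M2 (j * b) (j * b)
        = (j : ℝ) ^ 2 * (X / 6 * (((b : ℝ) - (j : ℝ)⁻¹) * (2 * (b : ℝ) - (j : ℝ)⁻¹) / 6)) := by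
      rw [M2_left_eq j b hj0 hb0, M2_right_eq (j * b) (Nat.mul_pos hj0 hb0), hXdef]
      push_cast
      field_simp
    have hsqrt : Real.sqrt (M2 (j * b) b * M2 (j * b) (j * b)) = (j : ℝ) * Den j := by
      rw [hM, Real.sqrt_mul (sq_nonneg _), Real.sqrt_sq hjR.le, hDen]
    rw [R2, hS, hsqrt, mul_div_mul_left _ _ hjne]
  -- limits
  have hinv : Tendsto (fun j : ℕ => (j : ℝ)⁻¹) atTop (nhds 0) :=
    tendsto_inv_atTop_nhds_zero_nat
  have hNumT : Tendsto Num atTop (nhds (X / 6 + ((b : ℝ) - 1) / 4)) := by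
    have : Tendsto (fun j : ℕ => X / 6 + (1 - (j : ℝ)⁻¹) * ((b : ℝ) - 1) / 4) atTop
        (nhds (X / 6 + (1 - 0) * ((b : ℝ) - 1) / 4)) := by
      apply Tendsto.add tendsto_const_nhds
      exact (((tendsto_const_nhds.sub hinv).mul tendsto_const_nhds).div_const 4)
    simpa using this
  have hDenT : Tendsto Den atTop
      (nhds (Real.sqrt (X / 6 * (((b : ℝ) - 0) * (2 * (b : ℝ) - 0) / 6)))) := by
    apply Filter.Tendsto.sqrt
    exact Tendsto.mul tendsto_const_nhds
      (((tendsto_const_nhds.sub hinv).mul (tendsto_const_nhds.sub hinv)).div_const 6)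
  -- identify the limit of Den
  have hD0 : Real.sqrt (X / 6 * (((b : ℝ) - 0) * (2 * (b : ℝ) - 0) / 6))
      = (b : ℝ) * Real.sqrt X * Real.sqrt 2 / 6 := by
    have h2 : Real.sqrt 2 ^ 2 = 2 := Real.sq_sqrt (by norm_num)
    have hx2 : Real.sqrt X ^ 2 = X := Real.sq_sqrt hX.le
    have key : X / 6 * (((b : ℝ) - 0) * (2 * (b : ℝ) - 0) / 6)
        = ((b : ℝ) * Real.sqrt X * Real.sqrt 2 / 6) ^ 2 := by
      have : ((b : ℝ) * Real.sqrt X * Real.sqrt 2 / 6) ^ 2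
          = (b : ℝ) ^ 2 * Real.sqrt X ^ 2 * Real.sqrt 2 ^ 2 / 36 := by ring
      rw [this, h2, hx2]; ring
    rw [key, Real.sqrt_sq (by positivity)]
  have hD0pos : (0 : ℝ) < (b : ℝ) * Real.sqrt X * Real.sqrt 2 / 6 := by
    have : (0 : ℝ) < (b : ℝ) := by positivity
    have hsX : 0 < Real.sqrt X := Real.sqrt_pos.mpr hX
    have hs2 : 0 < Real.sqrt 2 := Real.sqrt_pos.mpr (by norm_num)
    positivity
  rw [hD0] at hDenT
  have hdiv : Tendsto (fun j : ℕ => Num j / Den j) atTop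
      (nhds ((X / 6 + ((b : ℝ) - 1) / 4) / ((b : ℝ) * Real.sqrt X * Real.sqrt 2 / 6))) :=
    hNumT.div hDenT hD0pos.ne'
  -- identify the final value
  have hfinal : (X / 6 + ((b : ℝ) - 1) / 4) / ((b : ℝ) * Real.sqrt X * Real.sqrt 2 / 6)
      = Real.sqrt 2 * ((b : ℝ) - 1) * (4 * (b : ℝ) + 1)
        / (4 * (b : ℝ) * Real.sqrt X) := by
    have h2 : Real.sqrt 2 * Real.sqrt 2 = 2 := Real.mul_self_sqrt (by norm_num)
    have hsX : 0 < Real.sqrt X := Real.sqrt_pos.mpr hX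
    have hs2 : 0 < Real.sqrt 2 := Real.sqrt_pos.mpr (by norm_num)
    have hbpos : (0 : ℝ) < (b : ℝ) := by positivity
    rw [div_eq_div_iff (by positivity) (by positivity)]
    linear_combination (-(((b : ℝ) - 1) * (4 * (b : ℝ) + 1) * (b : ℝ) * Real.sqrt X / 6)) * h2
      + (2 * (b : ℝ) * Real.sqrt X / 3) * hXdef
  rw [← hfinal]
  exact hdiv.congr' heq
end

section
/- Let a ≥ 3 be an integer, let l be an integer with 1 < l < a, and let b_1 = k_1·a + l and b_2 = k_2·a + l with integers 1 ≤ k_1 < k_2. Then R_2(a; l, a) < R_2(a; l, b_2) < R_2(a; l, b_1). -/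
lemma div_sqrt_lt (X Y U V : ℝ) (hX : 0 ≤ X) (hY : 0 ≤ Y) (hU : 0 < U) (hV : 0 < V)
    (h : X^2 * V < Y^2 * U) : X / Real.sqrt U < Y / Real.sqrt V := by
  rw [show X / Real.sqrt U = Real.sqrt (X^2/U) by
        rw [Real.sqrt_div (sq_nonneg X), Real.sqrt_sq hX],
      show Y / Real.sqrt V = Real.sqrt (Y^2/V) by
        rw [Real.sqrt_div (sq_nonneg Y), Real.sqrt_sq hY]]
  exact Real.sqrt_lt_sqrt (by positivity) ((div_lt_div_iff₀ hU hV).mpr h)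

lemma scale_div (a x y z : ℝ) (ha : 0 < a) (hyz : 0 ≤ y * z) :
    ((1/a)*x) / Real.sqrt ((1/a)*y * ((1/a)*z)) = x / Real.sqrt (y*z) := by
  rw [show (1/a)*y*((1/a)*z) = (y*z)/a^2 by ring, Real.sqrt_div hyz,
    Real.sqrt_sq ha.le]
  field_simp

lemma lagrange (s : Finset ℕ) (p q : ℕ → ℝ) :
    ∑ m ∈ s, ∑ n ∈ s, (p m * q n - p n * q m)^2
      = 2 * ((∑ m ∈ s, p m ^2) * (∑ m ∈ s, q m ^2) - (∑ m ∈ s, p m * q m)^2) := by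
  have h1 : ∀ m ∈ s, ∀ n ∈ s, (p m * q n - p n * q m)^2
      = p m ^2 * q n ^2 + q m ^2 * p n ^2 - 2*((p m * q m)*(p n * q n)) := by
    intros; ring
  calc ∑ m ∈ s, ∑ n ∈ s, (p m * q n - p n * q m)^2
      = ∑ m ∈ s, ∑ n ∈ s, (p m ^2 * q n ^2 + q m ^2 * p n ^2 - 2*((p m * q m)*(p n * q n))) := by
        refine Finset.sum_congr rfl fun m hm => Finset.sum_congr rfl fun n hn => h1 m hm n hn
    _ = (∑ m ∈ s, p m ^2) * (∑ n ∈ s, q n ^2) + (∑ m ∈ s, q m ^2) * (∑ n ∈ s, p n ^2)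
        - 2*((∑ m ∈ s, p m * q m) * (∑ n ∈ s, p n * q n)) := by
        simp only [Finset.sum_add_distrib, Finset.sum_sub_distrib, ← Finset.mul_sum,
          ← Finset.sum_mul]
    _ = _ := by ring

lemma key (A B C k1 k2 : ℝ) (hA : 0 < A) (hB : 0 < B) (hC : 0 < C)
    (hCS : A^2 < B*C) (hk1 : 1 ≤ k1) (hk : k1 < k2) :
    A / Real.sqrt (B*C) < (k2*A+B) / Real.sqrt (B*(k2^2*C+2*k2*A+B)) ∧
    (k2*A+B) / Real.sqrt (B*(k2^2*C+2*k2*A+B)) < (k1*A+B) / Real.sqrt (B*(k1^2*C+2*k1*A+B)) := by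
  have hk1p : 0 < k1 := lt_of_lt_of_le one_pos hk1
  have hk2p : 0 < k2 := hk1p.trans hk
  have hD1 : 0 < B*(k1^2*C+2*k1*A+B) := by positivity
  have hD2 : 0 < B*(k2^2*C+2*k2*A+B) := by positivity
  have hBC : 0 < B*C := by positivity
  have hdiff : 0 < B*C - A^2 := sub_pos.mpr hCS
  constructor
  · apply div_sqrt_lt _ _ _ _ hA.le (by positivity) hBC hD2
    nlinarith [mul_pos (mul_pos hB (show (0:ℝ) < 2*k2*A+B by positivity)) hdiff]
  · apply div_sqrt_lt _ _ _ _ (by positivity) (by positivity) hD2 hD1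
    nlinarith [mul_pos (mul_pos (mul_pos hB (sub_pos.mpr hk))
      (show (0:ℝ) < 2*k1*k2*A+(k1+k2)*B by positivity)) hdiff]

theorem R2_monotone (a l : ℕ) (ha : 3 ≤ a) (hl1 : 1 < l) (hl2 : l < a)
    (k₁ k₂ b₁ b₂ : ℕ) (hk1 : 1 ≤ k₁) (hk : k₁ < k₂)
    (hb1 : b₁ = k₁ * a + l) (hb2 : b₂ = k₂ * a + l) :
    R2 a l a < R2 a l b₂ ∧ R2 a l b₂ < R2 a l b₁ := by
  subst hb1 hb2
  have ha0 : 0 < a := by omega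
  set p : ℕ → ℝ := fun m => ((m * l / a : ℕ) : ℝ) with hp
  set A : ℝ := ∑ m ∈ Finset.range a, p m * (m:ℝ) with hA
  set B : ℝ := ∑ m ∈ Finset.range a, p m ^ 2 with hB
  set C : ℝ := ∑ m ∈ Finset.range a, (m:ℝ) ^ 2 with hC
  -- basic floor facts
  have hpnonneg : ∀ m, 0 ≤ p m := fun m => Nat.cast_nonneg _
  have hpa1 : (a-1) * l / a = l - 1 := by
    have h1 : (a-1) * l = (a - l) + a * (l-1) := by
      zify [show 1 ≤ a by omega, show l ≤ a by omega, show 1 ≤ l by omega]; ring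
    rw [h1, Nat.add_mul_div_left _ _ ha0, Nat.div_eq_of_lt (by omega)]
    omega
  have hp1 : p 1 = 0 := by
    simp only [hp, one_mul, Nat.div_eq_of_lt hl2, Nat.cast_zero]
  have hpa1' : p (a-1) = ((l:ℝ) - 1) := by
    simp only [hp, hpa1]
    push_cast [show 1 ≤ l by omega]
    ring
  have hmem : a - 1 ∈ Finset.range a := by simp; omega
  have hmem1 : (1:ℕ) ∈ Finset.range a := by simp; omega
  -- positivity
  have hApos : 0 < A := by
    apply Finset.sum_pos' (fun m _ => by positivity)
    refine ⟨a-1, hmem, ?_⟩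
    rw [hpa1', show ((a-1:ℕ):ℝ) = (a:ℝ)-1 by push_cast [show 1 ≤ a by omega]; ring]
    have h2 : (2:ℝ) ≤ l := by exact_mod_cast hl1
    have h3 : (3:ℝ) ≤ a := by exact_mod_cast ha
    nlinarith
  have hBpos : 0 < B := by
    apply Finset.sum_pos' (fun m _ => by positivity)
    refine ⟨a-1, hmem, ?_⟩
    rw [hpa1']
    have : (2:ℝ) ≤ l := by exact_mod_cast hl1
    nlinarith
  have hCpos : 0 < C := by
    apply Finset.sum_pos' (fun m _ => by positivity)
    exact ⟨1, hmem1, by norm_num⟩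
  -- strict Cauchy–Schwarz via Lagrange
  have hCS : A^2 < B * C := by
    have hlag := lagrange (Finset.range a) p (fun m => (m:ℝ))
    have hterm : 0 < (p 1 * ((a-1 : ℕ):ℝ) - p (a-1) * ((1:ℕ):ℝ))^2 := by
      rw [hp1, hpa1']
      have : (2:ℝ) ≤ l := by exact_mod_cast hl1
      push_cast
      nlinarith
    have hsum : (p 1 * ((a-1 : ℕ):ℝ) - p (a-1) * ((1:ℕ):ℝ))^2
        ≤ ∑ m ∈ Finset.range a, ∑ n ∈ Finset.range a,
            (p m * ((n:ℕ):ℝ) - p n * ((m:ℕ):ℝ))^2 := by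
      calc (p 1 * ((a-1 : ℕ):ℝ) - p (a-1) * ((1:ℕ):ℝ))^2
          ≤ ∑ n ∈ Finset.range a, (p 1 * ((n:ℕ):ℝ) - p n * ((1:ℕ):ℝ))^2 :=
            Finset.single_le_sum
            (f := fun n => (p 1 * ((n:ℕ):ℝ) - p n * ((1:ℕ):ℝ))^2)
            (fun n _ => sq_nonneg _) hmem
        _ ≤ _ := Finset.single_le_sum
            (f := fun m => ∑ n ∈ Finset.range a, (p m * ((n:ℕ):ℝ) - p n * ((m:ℕ):ℝ))^2)
            (fun m _ => Finset.sum_nonneg fun n _ => sq_nonneg _) hmem1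
    nlinarith [hlag, hterm.trans_le hsum]
  -- floor division for b = k*a+l
  have hdiv : ∀ k m : ℕ, m * (k*a+l) / a = m*l/a + m*k := by
    intro k m
    rw [show m * (k*a+l) = m*l + a*(m*k) by ring, Nat.add_mul_div_left _ _ ha0]
  -- compute S2 and M2
  have hS2a : S2 a l a = (1/(a:ℝ)) * A := by
    unfold S2
    congr 1
    refine Finset.sum_congr rfl fun m _ => ?_
    rw [Nat.mul_div_cancel _ ha0]
  have hM2l : M2 a l = (1/(a:ℝ)) * B := rfl
  have hM2a : M2 a a = (1/(a:ℝ)) * C := by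
    unfold M2
    congr 1
    refine Finset.sum_congr rfl fun m _ => ?_
    rw [Nat.mul_div_cancel _ ha0]
  have hS2b : ∀ k : ℕ, S2 a l (k*a+l) = (1/(a:ℝ)) * ((k:ℝ)*A + B) := by
    intro k
    unfold S2
    rw [show ∑ m ∈ Finset.range a, ((m * l / a : ℕ) : ℝ) * ((m * (k*a+l) / a : ℕ) : ℝ)
        = ∑ m ∈ Finset.range a, ((k:ℝ)*(p m * (m:ℝ)) + p m ^2) from
      Finset.sum_congr rfl fun m _ => by
        rw [hdiv k m]; simp only [hp]; push_cast; ring]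
    rw [Finset.sum_add_distrib, ← Finset.mul_sum, ← hA, ← hB]
  have hM2b : ∀ k : ℕ, M2 a (k*a+l) = (1/(a:ℝ)) * ((k:ℝ)^2*C + 2*(k:ℝ)*A + B) := by
    intro k
    unfold M2
    rw [show ∑ m ∈ Finset.range a, ((m * (k*a+l) / a : ℕ) : ℝ)^2
        = ∑ m ∈ Finset.range a, ((k:ℝ)^2*(m:ℝ)^2 + 2*(k:ℝ)*(p m * (m:ℝ)) + p m ^2) from
      Finset.sum_congr rfl fun m _ => by
        rw [hdiv k m]; simp only [hp]; push_cast; ring]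
    rw [Finset.sum_add_distrib, Finset.sum_add_distrib, ← Finset.mul_sum, ← Finset.mul_sum,
      ← hA, ← hB, ← hC]
  -- rewrite R2 values
  have hapos : (0:ℝ) < a := by exact_mod_cast ha0
  have hR2a : R2 a l a = A / Real.sqrt (B * C) := by
    unfold R2
    rw [hS2a, hM2l, hM2a, scale_div _ _ _ _ hapos (by positivity)]
  have hR2b : ∀ k : ℕ, R2 a l (k*a+l)
      = ((k:ℝ)*A + B) / Real.sqrt (B * ((k:ℝ)^2*C + 2*(k:ℝ)*A + B)) := by
    intro k
    unfold R2
    rw [hS2b, hM2l, hM2b, scale_div _ _ _ _ hapos (by positivity)]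
  rw [hR2a, hR2b, hR2b]
  have hk1' : (1:ℝ) ≤ (k₁:ℝ) := by exact_mod_cast hk1
  have hk' : (k₁:ℝ) < (k₂:ℝ) := by exact_mod_cast hk
  exact key A B C (k₁:ℝ) (k₂:ℝ) hApos hBpos hCpos hCS hk1' hk'
end

section
/- If a = 3 or a = 5, then R_2(a; 2, b) < R_2(a; 3, b) for every integer b ≥ 3. If a = 4, then R_2(4; 2, b) < R_2(4; 3, b) for every integer b ≥ 3 with b ≠ 6, while R_2(4; 2, 6) > R_2(4; 3, 6). -/
lemma key_s15 (A B P Q : ℝ) (hB : 0 ≤ B) (hP : 0 < P) (hQ : 0 < Q)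
    (h : A^2 * Q < B^2 * P) : A / Real.sqrt P < B / Real.sqrt Q := by
  have hsP := Real.sqrt_pos.mpr hP
  have hsQ := Real.sqrt_pos.mpr hQ
  rw [div_lt_div_iff₀ hsP hsQ]
  have h2 : (A * Real.sqrt Q)^2 < (B * Real.sqrt P)^2 := by
    rw [mul_pow, mul_pow, Real.sq_sqrt hQ.le, Real.sq_sqrt hP.le]; exact h
  exact lt_of_pow_lt_pow_left₀ 2 (by positivity) h2

lemma case3 (b : ℕ) (hb : 3 ≤ b) : R2 3 2 b < R2 3 3 b := by
  have hnat : 5 * (2*b/3)^2 < (b/3 + 2*(2*b/3))^2 ∧ 0 < (b/3)^2 + (2*b/3)^2 := by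
    obtain ⟨q, r, hr, rfl⟩ : ∃ q r, r < 3 ∧ b = 3*q + r :=
      ⟨b/3, b%3, Nat.mod_lt _ (by norm_num), by omega⟩
    have hq : 1 ≤ q := by omega
    interval_cases r
    · have h1 : (3*q+0)/3 = q := by omega
      have h2 : 2*(3*q+0)/3 = 2*q := by omega
      rw [h1, h2]; constructor <;> nlinarith
    · have h1 : (3*q+1)/3 = q := by omega
      have h2 : 2*(3*q+1)/3 = 2*q := by omega
      rw [h1, h2]; constructor <;> nlinarith
    · have h1 : (3*q+2)/3 = q := by omega
      have h2 : 2*(3*q+2)/3 = 2*q+1 := by omega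
      rw [h1, h2]; constructor <;> nlinarith
  have h1 := hnat.1
  have h2 := hnat.2
  have h1' : (5:ℝ) * ((2*b/3 : ℕ):ℝ)^2 < (((b/3 : ℕ):ℝ) + 2*((2*b/3:ℕ):ℝ))^2 := by
    exact_mod_cast h1
  have h2' : (0:ℝ) < ((b/3:ℕ):ℝ)^2 + ((2*b/3:ℕ):ℝ)^2 := by exact_mod_cast h2
  unfold R2
  apply key_s15
  · unfold S2; positivity
  · norm_num [M2, Finset.sum_range_succ]; exact h2'
  · norm_num [M2, Finset.sum_range_succ]; exact h2'
  · norm_num [S2, M2, Finset.sum_range_succ]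
    nlinarith [h1', h2']

set_option maxHeartbeats 1600000 in
lemma case4 (b : ℕ) (hb : 3 ≤ b) (hb6 : b ≠ 6) : R2 4 2 b < R2 4 3 b := by
  have hnat : 5 * (2*b/4 + 3*b/4)^2 < 2 * (2*b/4 + 2*(3*b/4))^2 ∧
      0 < (b/4)^2 + (2*b/4)^2 + (3*b/4)^2 := by
    obtain ⟨q, r, hr, rfl⟩ : ∃ q r, r < 4 ∧ b = 4*q + r :=
      ⟨b/4, b%4, Nat.mod_lt _ (by norm_num), by omega⟩
    interval_cases r
    · have hq : 1 ≤ q := by omega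
      have h2 : 2*(4*q+0)/4 = 2*q := by omega
      have h3 : 3*(4*q+0)/4 = 3*q := by omega
      have h1 : (4*q+0)/4 = q := by omega
      rw [h1, h2, h3]; constructor <;> nlinarith
    · have hq : 1 ≤ q := by omega
      have h2 : 2*(4*q+1)/4 = 2*q := by omega
      have h3 : 3*(4*q+1)/4 = 3*q := by omega
      have h1 : (4*q+1)/4 = q := by omega
      rw [h1, h2, h3]; constructor <;> nlinarith
    · have hq : 2 ≤ q := by omega
      have h2 : 2*(4*q+2)/4 = 2*q+1 := by omega
      have h3 : 3*(4*q+2)/4 = 3*q+1 := by omega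
      have h1 : (4*q+2)/4 = q := by omega
      have hqq : 2*q ≤ q*q := Nat.mul_le_mul_right q hq
      rw [h1, h2, h3]; constructor <;> nlinarith
    · have h2 : 2*(4*q+3)/4 = 2*q+1 := by omega
      have h3 : 3*(4*q+3)/4 = 3*q+2 := by omega
      have h1 : (4*q+3)/4 = q := by omega
      rw [h1, h2, h3]; constructor <;> nlinarith
  have h1 := hnat.1
  have h2 := hnat.2
  have h1' : (5:ℝ) * (((2*b/4 : ℕ):ℝ) + ((3*b/4:ℕ):ℝ))^2
      < 2 * (((2*b/4:ℕ):ℝ) + 2*((3*b/4:ℕ):ℝ))^2 := by exact_mod_cast h1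
  have h2' : (0:ℝ) < ((b/4:ℕ):ℝ)^2 + ((2*b/4:ℕ):ℝ)^2 + ((3*b/4:ℕ):ℝ)^2 := by
    exact_mod_cast h2
  unfold R2
  apply key_s15
  · unfold S2; positivity
  · norm_num [M2, Finset.sum_range_succ]; nlinarith [h2']
  · norm_num [M2, Finset.sum_range_succ]; nlinarith [h2']
  · norm_num [S2, M2, Finset.sum_range_succ]
    nlinarith [h1', h2']

set_option maxHeartbeats 1600000 in
lemma case5 (b : ℕ) (hb : 3 ≤ b) : R2 5 2 b < R2 5 3 b := by
  have hnat : 3 * (3*b/5 + 4*b/5)^2 < (2*b/5 + 3*b/5 + 2*(4*b/5))^2 ∧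
      0 < (b/5)^2 + (2*b/5)^2 + (3*b/5)^2 + (4*b/5)^2 := by
    obtain ⟨q, r, hr, rfl⟩ : ∃ q r, r < 5 ∧ b = 5*q + r :=
      ⟨b/5, b%5, Nat.mod_lt _ (by norm_num), by omega⟩
    interval_cases r
    · have hq : 1 ≤ q := by omega
      have h1 : (5*q+0)/5 = q := by omega
      have h2 : 2*(5*q+0)/5 = 2*q := by omega
      have h3 : 3*(5*q+0)/5 = 3*q := by omega
      have h4 : 4*(5*q+0)/5 = 4*q := by omega
      rw [h1, h2, h3, h4]; constructor <;> nlinarith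
    · have hq : 1 ≤ q := by omega
      have h1 : (5*q+1)/5 = q := by omega
      have h2 : 2*(5*q+1)/5 = 2*q := by omega
      have h3 : 3*(5*q+1)/5 = 3*q := by omega
      have h4 : 4*(5*q+1)/5 = 4*q := by omega
      rw [h1, h2, h3, h4]; constructor <;> nlinarith
    · have hq : 1 ≤ q := by omega
      have h1 : (5*q+2)/5 = q := by omega
      have h2 : 2*(5*q+2)/5 = 2*q := by omega
      have h3 : 3*(5*q+2)/5 = 3*q+1 := by omega
      have h4 : 4*(5*q+2)/5 = 4*q+1 := by omega
      rw [h1, h2, h3, h4]; constructor <;> nlinarith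
    · have h1 : (5*q+3)/5 = q := by omega
      have h2 : 2*(5*q+3)/5 = 2*q+1 := by omega
      have h3 : 3*(5*q+3)/5 = 3*q+1 := by omega
      have h4 : 4*(5*q+3)/5 = 4*q+2 := by omega
      rw [h1, h2, h3, h4]; constructor <;> nlinarith
    · have h1 : (5*q+4)/5 = q := by omega
      have h2 : 2*(5*q+4)/5 = 2*q+1 := by omega
      have h3 : 3*(5*q+4)/5 = 3*q+2 := by omega
      have h4 : 4*(5*q+4)/5 = 4*q+3 := by omega
      rw [h1, h2, h3, h4]; constructor <;> nlinarith
  have h1 := hnat.1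
  have h2 := hnat.2
  have h1' : (3:ℝ) * (((3*b/5 : ℕ):ℝ) + ((4*b/5:ℕ):ℝ))^2
      < (((2*b/5:ℕ):ℝ) + ((3*b/5:ℕ):ℝ) + 2*((4*b/5:ℕ):ℝ))^2 := by exact_mod_cast h1
  have h2' : (0:ℝ) < ((b/5:ℕ):ℝ)^2 + ((2*b/5:ℕ):ℝ)^2 + ((3*b/5:ℕ):ℝ)^2 + ((4*b/5:ℕ):ℝ)^2 := by
    exact_mod_cast h2
  unfold R2
  apply key_s15
  · unfold S2; positivity
  · norm_num [M2, Finset.sum_range_succ]; nlinarith [h2']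
  · norm_num [M2, Finset.sum_range_succ]; nlinarith [h2']
  · norm_num [S2, M2, Finset.sum_range_succ]
    nlinarith [h1', h2']

set_option maxHeartbeats 1600000 in
lemma case46 : R2 4 3 6 < R2 4 2 6 := by
  unfold R2
  apply key_s15
  · norm_num [S2, Finset.sum_range_succ]
  · norm_num [M2, Finset.sum_range_succ]
  · norm_num [M2, Finset.sum_range_succ]
  · norm_num [S2, M2, Finset.sum_range_succ]

theorem R2_two_lt_three_small_a :
    (∀ a : ℕ, (a = 3 ∨ a = 5) → ∀ b : ℕ, 3 ≤ b → R2 a 2 b < R2 a 3 b)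
    ∧ (∀ b : ℕ, 3 ≤ b → b ≠ 6 → R2 4 2 b < R2 4 3 b)
    ∧ R2 4 3 6 < R2 4 2 6 := by
  refine ⟨?_, case4, case46⟩
  rintro a (rfl | rfl) b hb
  · exact case3 b hb
  · exact case5 b hb
end

section
/- For every integer a ≥ 3, R_2(a; 2, a) < R_2(a; 3, a). -/
/-!
Because `⌊m·a/a⌋ = m`, `R₂(a;b,a) = A_b / √(B_b · ∑ m²)` with `A_b = ∑ ⌊mb/a⌋·m` and
`B_b = ∑ ⌊mb/a⌋²`, so the claim is `A₂² B₃ < A₃² B₂`. For `m < a`, `⌊2m/a⌋` is the indicator of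
the top `⌊a/2⌋` values of `m`, and `⌊3m/a⌋` the sum of the indicators of the top `⌊2a/3⌋` and the
top `⌊a/3⌋` values; this gives closed forms for `A_b` and `B_b`, and the inequality between them
is checked residue class by residue class of `a` modulo 6.
-/

open Finset Real

theorem div_sqrt_lt_div_sqrt {x y p q : ℝ} (hy : 0 ≤ y) (hp : 0 < p) (hq : 0 < q)
    (h : x ^ 2 * q < y ^ 2 * p) : x / √p < y / √q := by
  rw [div_lt_div_iff₀ (sqrt_pos.2 hp) (sqrt_pos.2 hq)]
  refine lt_of_pow_lt_pow_left₀ 2 (by positivity) ?_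
  rwa [mul_pow, mul_pow, sq_sqrt hp.le, sq_sqrt hq.le]

theorem R2_self_eq (a b : ℕ) :
    R2 a b a = (∑ m ∈ range a, m * b / a * m : ℕ)
      / √((∑ m ∈ range a, (m * b / a) ^ 2 : ℕ) * (∑ m ∈ range a, m ^ 2 : ℕ)) := by
  rcases a.eq_zero_or_pos with rfl | ha
  · simp [R2, S2]
  have hinv : (0 : ℝ) < 1 / a := by positivity
  simp only [R2, S2, M2, Nat.mul_div_cancel _ ha]
  push_cast
  rw [mul_mul_mul_comm, sqrt_mul (by positivity), sqrt_mul_self hinv.le,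
    mul_div_mul_left _ _ hinv.ne']

theorem R2_self_lt_of_sq_mul_lt {a b c : ℕ}
    (h : (∑ m ∈ range a, m * b / a * m) ^ 2 * ∑ m ∈ range a, (m * c / a) ^ 2
      < (∑ m ∈ range a, m * c / a * m) ^ 2 * ∑ m ∈ range a, (m * b / a) ^ 2) :
    R2 a b a < R2 a c a := by
  rw [R2_self_eq, R2_self_eq]
  set A := ∑ m ∈ range a, m * b / a * m
  set B := ∑ m ∈ range a, (m * b / a) ^ 2
  set C := ∑ m ∈ range a, m * c / a * m
  set D := ∑ m ∈ range a, (m * c / a) ^ 2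
  set E := ∑ m ∈ range a, m ^ 2
  have hCB : 0 < C ^ 2 * B := (Nat.zero_le _).trans_lt h
  have hC : 0 < C := pos_of_ne_zero fun hC => by simp [hC] at hCB
  have hB : 0 < B := pos_of_ne_zero fun hB => by simp [hB] at hCB
  have hDE : 0 < D * E := (pow_pos hC 2).trans_le (sum_mul_sq_le_sq_mul_sq _ _ _)
  have hE : 0 < E := pos_of_ne_zero fun hE => by simp [hE] at hDE
  refine div_sqrt_lt_div_sqrt (Nat.cast_nonneg C) (by positivity) (by exact_mod_cast hDE) ?_
  have h' : A ^ 2 * (D * E) < C ^ 2 * (B * E) := by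
    simpa only [mul_assoc] using Nat.mul_lt_mul_of_pos_right h hE
  exact_mod_cast h'

theorem sum_Ico_sub_id_mul_two {a n : ℕ} (hn : n ≤ a) :
    (∑ m ∈ Ico (a - n) a, m) * 2 = n * (2 * a - 1 - n) := by
  obtain ⟨b, rfl⟩ := Nat.exists_eq_add_of_le hn
  rw [sum_Ico_eq_sum_range, Nat.add_sub_cancel_left, Nat.add_sub_cancel, sum_add_distrib, sum_const,
    card_range, smul_eq_mul, add_mul, sum_range_id_mul_two]
  rcases n with _ | n
  · simp
  · rw [show 2 * (n + 1 + b) - 1 - (n + 1) = n + 2 * b by omega, Nat.add_sub_cancel]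
    ring

theorem sum_range_ite_sub_le (f : ℕ → ℕ) (a n : ℕ) :
    ∑ m ∈ range a, (if a - n ≤ m then f m else 0) = ∑ m ∈ Ico (a - n) a, f m := by
  rw [← sum_filter]
  congr 1
  ext m
  simp only [mem_filter, mem_range, mem_Ico]
  omega

theorem mul_two_div_eq_ite {a m : ℕ} (hm : m < a) :
    m * 2 / a = if a - a / 2 ≤ m then 1 else 0 := by
  split_ifs
  · exact Nat.div_eq_of_lt_le (by omega) (by omega)
  · exact Nat.div_eq_of_lt (by omega)

theorem mul_three_div_eq_ite {a m : ℕ} (hm : m < a) :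
    m * 3 / a = (if a - 2 * a / 3 ≤ m then 1 else 0) + (if a - a / 3 ≤ m then 1 else 0) := by
  split_ifs
  · exact Nat.div_eq_of_lt_le (by omega) (by omega)
  · exact Nat.div_eq_of_lt_le (by omega) (by omega)
  · omega
  · exact Nat.div_eq_of_lt (by omega)

theorem sum_range_mul_two_div_sq (a : ℕ) : ∑ m ∈ range a, (m * 2 / a) ^ 2 = a / 2 := by
  have h : ∀ m ∈ range a, (m * 2 / a) ^ 2 = if a - a / 2 ≤ m then 1 else 0 := fun m hm => by
    rw [mul_two_div_eq_ite (mem_range.1 hm)]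
    split_ifs <;> rfl
  rw [sum_congr rfl h, sum_range_ite_sub_le, sum_const, Nat.card_Ico, smul_eq_mul,
    mul_one]
  omega

theorem sum_range_mul_two_div_mul_mul_two (a : ℕ) :
    (∑ m ∈ range a, m * 2 / a * m) * 2 = a / 2 * (2 * a - 1 - a / 2) := by
  have h : ∀ m ∈ range a, m * 2 / a * m = if a - a / 2 ≤ m then m else 0 := fun m hm => by
    rw [mul_two_div_eq_ite (mem_range.1 hm)]
    split_ifs <;> simp
  rw [sum_congr rfl h, sum_range_ite_sub_le, sum_Ico_sub_id_mul_two (by omega)]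

theorem sum_range_mul_three_div_sq (a : ℕ) :
    ∑ m ∈ range a, (m * 3 / a) ^ 2 = 2 * a / 3 + 3 * (a / 3) := by
  have h : ∀ m ∈ range a, (m * 3 / a) ^ 2 =
      (if a - 2 * a / 3 ≤ m then 1 else 0) + 3 * (if a - a / 3 ≤ m then 1 else 0) := fun m hm => by
    rw [mul_three_div_eq_ite (mem_range.1 hm)]
    split_ifs <;> omega
  rw [sum_congr rfl h, sum_add_distrib, ← mul_sum, sum_range_ite_sub_le,
    sum_range_ite_sub_le, sum_const, sum_const, Nat.card_Ico, Nat.card_Ico]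
  simp only [smul_eq_mul, mul_one]
  omega

theorem sum_range_mul_three_div_mul_mul_two (a : ℕ) :
    (∑ m ∈ range a, m * 3 / a * m) * 2
      = 2 * a / 3 * (2 * a - 1 - 2 * a / 3) + a / 3 * (2 * a - 1 - a / 3) := by
  have h : ∀ m ∈ range a, m * 3 / a * m =
      (if a - 2 * a / 3 ≤ m then m else 0) + (if a - a / 3 ≤ m then m else 0) := fun m hm => by
    rw [mul_three_div_eq_ite (mem_range.1 hm)]
    split_ifs <;> omega
  rw [sum_congr rfl h, sum_add_distrib, add_mul, sum_range_ite_sub_le, sum_range_ite_sub_le,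
    sum_Ico_sub_id_mul_two (by omega), sum_Ico_sub_id_mul_two (by omega)]

theorem floor_two_three_ineq (a : ℕ) (ha : 3 ≤ a) :
    (a / 2 * (2 * a - 1 - a / 2)) ^ 2 * (2 * a / 3 + 3 * (a / 3))
      < (2 * a / 3 * (2 * a - 1 - 2 * a / 3) + a / 3 * (2 * a - 1 - a / 3)) ^ 2 * (a / 2) := by
  obtain ⟨k, r, hr, hr', rfl⟩ : ∃ k r, 3 ≤ r ∧ r < 9 ∧ a = 6 * k + r :=
    ⟨(a - 3) / 6, (a - 3) % 6 + 3, by omega, by omega, by omega⟩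
  have hx : (6 * k + r) / 2 = 3 * k + r / 2 := by omega
  have hu : 2 * (6 * k + r) / 3 = 4 * k + 2 * r / 3 := by omega
  have hv : (6 * k + r) / 3 = 2 * k + r / 3 := by omega
  have hx' : 2 * (6 * k + r) - 1 - (6 * k + r) / 2 = 9 * k + (2 * r - 1 - r / 2) := by omega
  have hu' : 2 * (6 * k + r) - 1 - 2 * (6 * k + r) / 3 = 8 * k + (2 * r - 1 - 2 * r / 3) := by omega
  have hv' : 2 * (6 * k + r) - 1 - (6 * k + r) / 3 = 10 * k + (2 * r - 1 - r / 3) := by omega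
  rw [hx', hu', hv', hx, hu, hv]
  -- Taking `r ≥ 3` keeps the truncated subtractions above exact; each case is then a polynomial
  -- inequality in `k` that holds coefficient by coefficient.
  interval_cases r <;> norm_num <;> ring_nf <;>
    linarith [pow_nonneg k.zero_le 2, pow_nonneg k.zero_le 3, pow_nonneg k.zero_le 4,
      pow_nonneg k.zero_le 5]

theorem R2_two_lt_three (a : ℕ) (ha : 3 ≤ a) : R2 a 2 a < R2 a 3 a := by
  apply R2_self_lt_of_sq_mul_lt
  have key := floor_two_three_ineq a ha
  rw [← sum_range_mul_two_div_mul_mul_two, ← sum_range_mul_three_div_mul_mul_two,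
    ← sum_range_mul_two_div_sq, ← sum_range_mul_three_div_sq] at key
  linarith
end

section
/- Let a ≥ 3 be an integer and let b, c ≥ 2 be integers, and set l = b mod a and l' = c mod a. If 2 ≤ l ≤ a−1 and 2 ≤ l' ≤ a−1, then R_2(a; b, c) ≥ min( R_2(a; l', a), R_2(a; l, a), R_2(a; l', l) ). -/
lemma nat_entry_decomp (a b m : ℕ) (ha : 0 < a) :
    m * b / a = m * (b / a) + m * (b % a) / a := by
  have h : m * b = m * (b % a) + m * (b / a) * a := by
    conv_lhs => rw [← Nat.div_add_mod b a]
    ring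
  rw [h, Nat.add_mul_div_right _ _ ha]
  omega

lemma entry_decomp (a b m : ℕ) (ha : 0 < a) :
    ((m * b / a : ℕ) : ℝ) = ((b / a : ℕ) : ℝ) * ((m * a / a : ℕ) : ℝ)
      + ((m * (b % a) / a : ℕ) : ℝ) := by
  rw [Nat.mul_div_cancel _ ha, nat_entry_decomp a b m ha]
  push_cast
  ring

lemma S2_comm (a b c : ℕ) : S2 a b c = S2 a c b := by
  unfold S2
  congr 1
  exact Finset.sum_congr rfl fun m _ => mul_comm _ _

lemma M2_eq_S2 (a b : ℕ) : M2 a b = S2 a b b := by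
  unfold M2 S2
  congr 1
  exact Finset.sum_congr rfl fun m _ => sq _

lemma S2_nonneg (a b c : ℕ) : 0 ≤ S2 a b c := by
  unfold S2
  apply mul_nonneg (by positivity)
  exact Finset.sum_nonneg fun m _ => mul_nonneg (Nat.cast_nonneg _) (Nat.cast_nonneg _)

lemma M2_nonneg (a b : ℕ) : 0 ≤ M2 a b := by
  rw [M2_eq_S2]; exact S2_nonneg a b b

lemma S2_decomp (a b c : ℕ) (ha : 0 < a) :
    S2 a b c = ((b / a : ℕ) : ℝ) * ((c / a : ℕ) : ℝ) * S2 a a a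
      + ((b / a : ℕ) : ℝ) * S2 a a (c % a)
      + ((c / a : ℕ) : ℝ) * S2 a (b % a) a
      + S2 a (b % a) (c % a) := by
  have h : ∀ m ∈ Finset.range a,
      ((m * b / a : ℕ) : ℝ) * ((m * c / a : ℕ) : ℝ)
      = ((b / a : ℕ) : ℝ) * ((c / a : ℕ) : ℝ) * (((m * a / a : ℕ) : ℝ) * ((m * a / a : ℕ) : ℝ))
        + ((b / a : ℕ) : ℝ) * (((m * a / a : ℕ) : ℝ) * ((m * (c % a) / a : ℕ) : ℝ))
        + ((c / a : ℕ) : ℝ) * (((m * (b % a) / a : ℕ) : ℝ) * ((m * a / a : ℕ) : ℝ))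
        + ((m * (b % a) / a : ℕ) : ℝ) * ((m * (c % a) / a : ℕ) : ℝ) := by
    intro m _
    rw [entry_decomp a b m ha, entry_decomp a c m ha]
    ring
  unfold S2
  rw [Finset.sum_congr rfl h, Finset.sum_add_distrib, Finset.sum_add_distrib,
    Finset.sum_add_distrib, ← Finset.mul_sum, ← Finset.mul_sum, ← Finset.mul_sum]
  ring

lemma sqrt_mul_sqrt_mul (t x y : ℝ) (ht : 0 ≤ t) :
    Real.sqrt (t * x) * Real.sqrt (t * y) = t * (Real.sqrt x * Real.sqrt y) := by
  have e2 := Real.mul_self_sqrt ht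
  rw [Real.sqrt_mul ht, Real.sqrt_mul ht]
  linear_combination Real.sqrt x * Real.sqrt y * e2

/-- Cauchy–Schwarz for `S2`. -/
lemma S2_le (a b c : ℕ) : S2 a b c ≤ Real.sqrt (M2 a b) * Real.sqrt (M2 a c) := by
  unfold S2
  have hcs := Finset.sum_mul_sq_le_sq_mul_sq (Finset.range a)
    (fun m => ((m * b / a : ℕ) : ℝ)) (fun m => ((m * c / a : ℕ) : ℝ))
  have hs : (0 : ℝ) ≤ ∑ m ∈ Finset.range a, ((m * b / a : ℕ) : ℝ) * ((m * c / a : ℕ) : ℝ) :=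
    Finset.sum_nonneg fun m _ => mul_nonneg (Nat.cast_nonneg _) (Nat.cast_nonneg _)
  have h1 : ∑ m ∈ Finset.range a, ((m * b / a : ℕ) : ℝ) * ((m * c / a : ℕ) : ℝ)
      ≤ Real.sqrt (∑ m ∈ Finset.range a, ((m * b / a : ℕ) : ℝ) ^ 2)
        * Real.sqrt (∑ m ∈ Finset.range a, ((m * c / a : ℕ) : ℝ) ^ 2) := by
    rw [← Real.sqrt_mul (Finset.sum_nonneg fun m _ => sq_nonneg _)]
    calc _ = Real.sqrt ((∑ m ∈ Finset.range a, ((m * b / a : ℕ) : ℝ) * ((m * c / a : ℕ) : ℝ))^2) :=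
            (Real.sqrt_sq hs).symm
      _ ≤ _ := Real.sqrt_le_sqrt hcs
  unfold M2
  have ha0 : (0 : ℝ) ≤ 1 / (a : ℝ) := by positivity
  calc (1 / (a : ℝ)) * ∑ m ∈ Finset.range a, ((m * b / a : ℕ) : ℝ) * ((m * c / a : ℕ) : ℝ)
      ≤ (1 / (a : ℝ)) * (Real.sqrt (∑ m ∈ Finset.range a, ((m * b / a : ℕ) : ℝ) ^ 2)
        * Real.sqrt (∑ m ∈ Finset.range a, ((m * c / a : ℕ) : ℝ) ^ 2)) := by
        exact mul_le_mul_of_nonneg_left h1 ha0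
    _ = _ := (sqrt_mul_sqrt_mul _ _ _ ha0).symm

lemma M2_pos (a x : ℕ) (ha : 3 ≤ a) (hx : 2 ≤ x) : 0 < M2 a x := by
  have ha0 : 0 < a := by omega
  have hmem : a - 1 ∈ Finset.range a := Finset.mem_range.mpr (by omega)
  have hterm : (1 : ℝ) ≤ (((a - 1) * x / a : ℕ) : ℝ) ^ 2 := by
    have : 1 ≤ (a - 1) * x / a := by
      rw [Nat.one_le_div_iff ha0]
      calc a ≤ (a - 1) * 2 := by omega
        _ ≤ (a - 1) * x := Nat.mul_le_mul_left _ hx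
    have h1 : (1 : ℝ) ≤ (((a - 1) * x / a : ℕ) : ℝ) := by exact_mod_cast this
    nlinarith
  have hsum : (1 : ℝ) ≤ ∑ m ∈ Finset.range a, ((m * x / a : ℕ) : ℝ) ^ 2 := by
    calc (1 : ℝ) ≤ (((a - 1) * x / a : ℕ) : ℝ) ^ 2 := hterm
      _ ≤ _ := Finset.single_le_sum (f := fun m => ((m * x / a : ℕ) : ℝ) ^ 2)
          (fun m _ => sq_nonneg _) hmem
  unfold M2
  have h0 : (0 : ℝ) < 1 / (a : ℝ) := by positivity
  exact mul_pos h0 (by linarith)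

set_option maxHeartbeats 1000000 in
theorem R2_ge_min (a b c : ℕ) (ha : 3 ≤ a) (hb : 2 ≤ b) (hc : 2 ≤ c)
    (l l' : ℕ) (hl : l = b % a) (hl' : l' = c % a)
    (h2l : 2 ≤ l) (hla : l ≤ a - 1) (h2l' : 2 ≤ l') (hl'a : l' ≤ a - 1) :
    R2 a b c ≥ min (R2 a l' a) (min (R2 a l a) (R2 a l' l)) := by
  have ha0 : 0 < a := by omega
  set μ : ℝ := min (R2 a l' a) (min (R2 a l a) (R2 a l' l)) with hμ
  -- positivity facts
  have hMa : 0 < M2 a a := M2_pos a a ha (by omega)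
  have hMl : 0 < M2 a l := M2_pos a l ha h2l
  have hMl' : 0 < M2 a l' := M2_pos a l' ha h2l'
  have hMb : 0 < M2 a b := M2_pos a b ha hb
  have hMc : 0 < M2 a c := M2_pos a c ha hc
  set Na := Real.sqrt (M2 a a) with hNa
  set Nl := Real.sqrt (M2 a l) with hNl
  set Nl' := Real.sqrt (M2 a l') with hNl'
  have hNa0 : 0 < Na := Real.sqrt_pos.mpr hMa
  have hNl0 : 0 < Nl := Real.sqrt_pos.mpr hMl
  have hNl'0 : 0 < Nl' := Real.sqrt_pos.mpr hMl'
  have hNa2 : Na ^ 2 = M2 a a := Real.sq_sqrt hMa.le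
  -- bound : μ * (sqrt Mx * sqrt My) ≤ S2 a x y, for the three pairs
  have key : ∀ x y : ℕ, μ ≤ R2 a x y →
      μ * (Real.sqrt (M2 a x) * Real.sqrt (M2 a y)) ≤ S2 a x y := by
    intro x y hxy
    rcases le_or_gt (Real.sqrt (M2 a x) * Real.sqrt (M2 a y)) 0 with h | h
    · calc μ * (Real.sqrt (M2 a x) * Real.sqrt (M2 a y)) ≤ 0 := by
            rcases le_or_gt 0 μ with hμ0 | hμ0
            · exact mul_nonpos_of_nonneg_of_nonpos hμ0 h
            · nlinarith [Real.sqrt_nonneg (M2 a x), Real.sqrt_nonneg (M2 a y),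
                mul_nonneg (Real.sqrt_nonneg (M2 a x)) (Real.sqrt_nonneg (M2 a y))]
        _ ≤ S2 a x y := S2_nonneg a x y
    · rw [R2, Real.sqrt_mul (M2_nonneg a x)] at hxy
      exact (le_div_iff₀ h).mp hxy
  have h1 : μ * (Nl' * Na) ≤ S2 a l' a := key l' a (min_le_left _ _)
  have h2 : μ * (Nl * Na) ≤ S2 a l a := key l a ((min_le_right _ _).trans (min_le_left _ _))
  have h3 : μ * (Nl' * Nl) ≤ S2 a l' l := key l' l ((min_le_right _ _).trans (min_le_right _ _))
  -- μ ≤ 1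
  have hμ1 : μ ≤ 1 := by
    have hle : R2 a l' a ≤ 1 := by
      rw [R2, div_le_one (by rw [Real.sqrt_mul (M2_nonneg a l')]; exact mul_pos hNl'0 hNa0)]
      rw [Real.sqrt_mul (M2_nonneg a l')]
      exact S2_le a l' a
    exact (min_le_left _ _).trans hle
  have hμ0 : 0 ≤ μ := by
    have : 0 ≤ R2 a l' a := div_nonneg (S2_nonneg a l' a) (Real.sqrt_nonneg _)
    have h2' : 0 ≤ R2 a l a := div_nonneg (S2_nonneg a l a) (Real.sqrt_nonneg _)
    have h3' : 0 ≤ R2 a l' l := div_nonneg (S2_nonneg a l' l) (Real.sqrt_nonneg _)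
    rw [hμ]
    exact le_min this (le_min h2' h3')
  -- decomposition of S2 a b c
  set q : ℝ := ((b / a : ℕ) : ℝ) with hq
  set q' : ℝ := ((c / a : ℕ) : ℝ) with hq'
  have hq0 : 0 ≤ q := Nat.cast_nonneg _
  have hq'0 : 0 ≤ q' := Nat.cast_nonneg _
  have hSaa : S2 a a a = Na ^ 2 := by rw [hNa2, M2_eq_S2]
  have hdec : S2 a b c = q * q' * S2 a a a + q * S2 a a l' + q' * S2 a l a + S2 a l l' := by
    rw [S2_decomp a b c ha0, ← hl, ← hl']
  -- lower bound for S2 a b c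
  have hS2lb : μ * ((q * Na + Nl) * (q' * Na + Nl')) ≤ S2 a b c := by
    have e1 : S2 a a l' = S2 a l' a := S2_comm a a l'
    have e2 : S2 a l l' = S2 a l' l := S2_comm a l l'
    have b1 : μ * (Na * Na) ≤ S2 a a a := by nlinarith
    nlinarith [mul_le_mul_of_nonneg_left b1 (mul_nonneg hq0 hq'0),
      mul_le_mul_of_nonneg_left h1 hq0, mul_le_mul_of_nonneg_left h2 hq'0]
  -- upper bounds for norms of b, c
  have hub : ∀ x lx : ℕ, lx = x % a → 2 ≤ lx →
      Real.sqrt (M2 a x) ≤ ((x / a : ℕ) : ℝ) * Na + Real.sqrt (M2 a lx) := by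
    intro x lx hlx h2lx
    have hcs : S2 a a lx ≤ Na * Real.sqrt (M2 a lx) := S2_le a a lx
    have hcs' : S2 a lx a ≤ Na * Real.sqrt (M2 a lx) := by rw [S2_comm]; exact hcs
    have hdx : M2 a x = ((x / a : ℕ) : ℝ) * ((x / a : ℕ) : ℝ) * S2 a a a
        + ((x / a : ℕ) : ℝ) * S2 a a lx + ((x / a : ℕ) : ℝ) * S2 a lx a + S2 a lx lx := by
      rw [M2_eq_S2, S2_decomp a x x ha0, ← hlx]
    have hMlx : Real.sqrt (M2 a lx) ^ 2 = M2 a lx := Real.sq_sqrt (M2_nonneg a lx)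
    have hMlx' : S2 a lx lx = Real.sqrt (M2 a lx) ^ 2 := by rw [hMlx, M2_eq_S2]
    have hxq : (0 : ℝ) ≤ ((x / a : ℕ) : ℝ) := Nat.cast_nonneg _
    have hSaa2 : S2 a a a = Na ^ 2 := by rw [hNa2, M2_eq_S2]
    have t1 := mul_le_mul_of_nonneg_left hcs hxq
    have t2 := mul_le_mul_of_nonneg_left hcs' hxq
    have hle : M2 a x ≤ (((x / a : ℕ) : ℝ) * Na + Real.sqrt (M2 a lx)) ^ 2 := by
      rw [hdx, hSaa2, hMlx']
      nlinarith [t1, t2]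
    calc Real.sqrt (M2 a x) ≤ Real.sqrt ((((x / a : ℕ) : ℝ) * Na + Real.sqrt (M2 a lx)) ^ 2) :=
          Real.sqrt_le_sqrt hle
      _ = ((x / a : ℕ) : ℝ) * Na + Real.sqrt (M2 a lx) := Real.sqrt_sq
          (by positivity)
  have hubB : Real.sqrt (M2 a b) ≤ q * Na + Nl := by
    have := hub b l hl h2l; rwa [← hNl, ← hq] at this
  have hubC : Real.sqrt (M2 a c) ≤ q' * Na + Nl' := by
    have := hub c l' hl' h2l'; rwa [← hNl', ← hq'] at this
  -- conclude
  have hD : Real.sqrt (M2 a b * M2 a c) = Real.sqrt (M2 a b) * Real.sqrt (M2 a c) :=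
    Real.sqrt_mul (M2_nonneg a b) _
  have hDpos : 0 < Real.sqrt (M2 a b) * Real.sqrt (M2 a c) :=
    mul_pos (Real.sqrt_pos.mpr hMb) (Real.sqrt_pos.mpr hMc)
  rw [ge_iff_le, R2, hD, le_div_iff₀ hDpos]
  calc μ * (Real.sqrt (M2 a b) * Real.sqrt (M2 a c))
      ≤ μ * ((q * Na + Nl) * (q' * Na + Nl')) := by
        apply mul_le_mul_of_nonneg_left _ hμ0
        exact mul_le_mul hubB hubC (Real.sqrt_nonneg _) (by positivity)
    _ ≤ S2 a b c := hS2lb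
end
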